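/- Let P_{Y|X} be a channel with binary input alphabet X ∈ {0,1} and arbitrary finite output alphabet 𝒴 = {y₁,…,yₙ}, satisfying ε-differential privacy: P_{Y|X}(y|x) ≤ e^{ε}·P_{Y|X}(y|x') for all y ∈ 𝒴 and x, x' ∈ {0,1}. Then its min-entropy-based maximal leakage satisfies ML(P_{Y|X}) ≤ log₂(2e^{ε}/(1 + e^{ε})). -/
import Mathlib


open Real
open scoped BigOperators

/-- The min-entropy leakage `H_∞(X) − H_∞(X|Y)` of a channel `Q` with binary input
`X ∈ {0,1}` under the input distribution `PX`, where
`H_∞(X) = −log₂ max_x PX(x)` and `H_∞(X|Y) = −log₂ Σ_y max_x PX(x)·Q(y|x)`. -/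
noncomputable def minEntLeakage {𝒴 : Type*} [Fintype 𝒴]
    (PX : Bool → ℝ) (Q : Bool → 𝒴 → ℝ) : ℝ :=
  logb 2 (∑ y, max (PX false * Q false y) (PX true * Q true y)) -
    logb 2 (max (PX false) (PX true))

/-- If a channel with binary input and an arbitrary finite output alphabet satisfies
`ε`-differential privacy (`P_{Y|X}(y|x) ≤ e^{ε}·P_{Y|X}(y|x')` for all `y, x, x'`),
then its min-entropy-based maximal leakage `ML(P_{Y|X}) = max_{P_X} (H_∞(X) − H_∞(X|Y))`
is at most `log₂(2e^{ε}/(1 + e^{ε}))`. -/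
theorem maximal_leakage_le_of_dp {𝒴 : Type*} [Fintype 𝒴]
    (Q : Bool → 𝒴 → ℝ) (ε : ℝ)
    (hQ0 : ∀ x y, 0 ≤ Q x y) (hQ1 : ∀ x, ∑ y, Q x y = 1)
    (hDP : ∀ (y : 𝒴) (x x' : Bool), Q x y ≤ exp ε * Q x' y) :
    ∀ PX : Bool → ℝ, (∀ x, 0 ≤ PX x) → (PX false + PX true = 1) →
      minEntLeakage PX Q ≤ logb 2 (2 * exp ε / (1 + exp ε)) := by
  intro PX hPX hsum
  set M := max (PX false) (PX true) with hM
  set S := ∑ y, max (PX false * Q false y) (PX true * Q true y) with hS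
  have hexp : 0 < exp ε := exp_pos ε
  have hden : 0 < 1 + exp ε := by linarith
  have hMpos : 0 < M := by
    rcases le_total (PX false) (PX true) with h | h
    · have : M = PX true := max_eq_right h
      rw [this]; linarith
    · have : M = PX false := max_eq_left h
      rw [this]; linarith
  have hSgeM : M ≤ S := by
    rcases le_total (PX false) (PX true) with h | h
    · have : M = PX true := max_eq_right h
      rw [this, hS]
      calc PX true = PX true * ∑ y, Q true y := by rw [hQ1]; ring
        _ = ∑ y, PX true * Q true y := by rw [Finset.mul_sum]
        _ ≤ ∑ y, max (PX false * Q false y) (PX true * Q true y) :=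
            Finset.sum_le_sum fun y _ => le_max_right _ _
    · have : M = PX false := max_eq_left h
      rw [this, hS]
      calc PX false = PX false * ∑ y, Q false y := by rw [hQ1]; ring
        _ = ∑ y, PX false * Q false y := by rw [Finset.mul_sum]
        _ ≤ ∑ y, max (PX false * Q false y) (PX true * Q true y) :=
            Finset.sum_le_sum fun y _ => le_max_left _ _
  have hSpos : 0 < S := lt_of_lt_of_le hMpos hSgeM
  -- pointwise bound
  have hpt : ∀ y : 𝒴, max (PX false * Q false y) (PX true * Q true y)
      ≤ M * (exp ε / (1 + exp ε)) * (Q false y + Q true y) := by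
    intro y
    have h0 := hQ0 false y
    have h1 := hQ0 true y
    have hd1 := hDP y false true
    have hd2 := hDP y true false
    have hmaxQ : max (Q false y) (Q true y) ≤ exp ε / (1 + exp ε) * (Q false y + Q true y) := by
      apply max_le
      · rw [div_mul_eq_mul_div, le_div_iff₀ hden]; nlinarith
      · rw [div_mul_eq_mul_div, le_div_iff₀ hden]; nlinarith
    have hPf : PX false ≤ M := le_max_left _ _
    have hPt : PX true ≤ M := le_max_right _ _
    have : max (PX false * Q false y) (PX true * Q true y) ≤ M * max (Q false y) (Q true y) := by
      apply max_le
      · exact le_trans (mul_le_mul_of_nonneg_right hPf h0) (mul_le_mul_of_nonneg_left (le_max_left _ _) hMpos.le)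
      · exact le_trans (mul_le_mul_of_nonneg_right hPt h1) (mul_le_mul_of_nonneg_left (le_max_right _ _) hMpos.le)
    calc max (PX false * Q false y) (PX true * Q true y)
        ≤ M * max (Q false y) (Q true y) := this
      _ ≤ M * (exp ε / (1 + exp ε) * (Q false y + Q true y)) :=
          mul_le_mul_of_nonneg_left hmaxQ hMpos.le
      _ = M * (exp ε / (1 + exp ε)) * (Q false y + Q true y) := by ring
  have hSle : S ≤ M * (2 * exp ε / (1 + exp ε)) := by
    calc S ≤ ∑ y, M * (exp ε / (1 + exp ε)) * (Q false y + Q true y) :=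
          Finset.sum_le_sum fun y _ => hpt y
      _ = M * (exp ε / (1 + exp ε)) * ((∑ y, Q false y) + ∑ y, Q true y) := by
          rw [← Finset.mul_sum, Finset.sum_add_distrib]
      _ = M * (2 * exp ε / (1 + exp ε)) := by rw [hQ1, hQ1]; ring
  have hfrac : S / M ≤ 2 * exp ε / (1 + exp ε) := by
    rw [div_le_iff₀ hMpos]; linarith [hSle]
  have hfracpos : 0 < S / M := div_pos hSpos hMpos
  have := Real.logb_le_logb_of_le (b := 2) (by norm_num) hfracpos hfrac
  rw [Real.logb_div hSpos.ne' hMpos.ne'] at this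
  simpa [minEntLeakage] using this
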